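/- For every n ∈ ℕ, 1 − g^{(n+1)}(1/2 + 1/√8) ≤ (1/3)·(3(1/2 − 1/√8))^{2ⁿ}. -/
import Mathlib


/-- The majority-vote function `g(p) = 3p² − 2p³`; `g^[n]` denotes its `n`-th iterate. -/
noncomputable def gmaj (p : ℝ) : ℝ := 3 * p ^ 2 - 2 * p ^ 3

lemma gmaj_step (p : ℝ) (h0 : 0 ≤ 1 - p) (h1 : 1 - p ≤ 3 / 2) :
    0 ≤ 1 - gmaj p ∧ 1 - gmaj p ≤ 3 * (1 - p) ^ 2 := by
  constructor <;> · unfold gmaj; nlinarith [sq_nonneg (1 - p), sq_nonneg p]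

theorem gmaj_iterate_second_phase (n : ℕ) :
    1 - gmaj^[n + 1] (1 / 2 + 1 / Real.sqrt 8)
      ≤ (1 / 3) * (3 * (1 / 2 - 1 / Real.sqrt 8)) ^ (2 ^ n) := by
  set s := Real.sqrt 8 with hs
  have hs2 : s ^ 2 = 8 := Real.sq_sqrt (by norm_num)
  have hs_lb : 2 ≤ s := by nlinarith [Real.sqrt_nonneg 8]
  have hs_ub : s ≤ 3 := by nlinarith [Real.sqrt_nonneg 8]
  have hspos : 0 < s := by linarith
  set ε : ℝ := 3 * (1 / 2 - 1 / s) with hε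
  have hε0 : 0 ≤ ε := by
    have : 1 / s ≤ 1 / 2 := by
      apply one_div_le_one_div_of_le <;> linarith
    rw [hε]; linarith
  have hε1 : ε ≤ 1 := by
    have : 1 / 3 ≤ 1 / s := by
      apply one_div_le_one_div_of_le <;> linarith
    rw [hε]; linarith
  set p₀ : ℝ := 1 / 2 + 1 / s with hp₀
  -- strengthened induction
  have main : ∀ n : ℕ, 0 ≤ 1 - gmaj^[n + 1] p₀ ∧
      3 * (1 - gmaj^[n + 1] p₀) ≤ ε ^ (2 ^ n) := by
    intro n
    induction n with
    | zero =>
      have hinv : 1 / s * s = 1 := by field_simp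
      have h0 : 0 ≤ 1 - p₀ := by
        rw [hp₀]
        have : 1 / s ≤ 1 / 2 := by
          apply one_div_le_one_div_of_le <;> linarith
        linarith
      have h1 : 1 - p₀ ≤ 3 / 2 := by
        rw [hp₀]
        have : 0 ≤ 1 / s := by positivity
        linarith
      obtain ⟨ha, hb⟩ := gmaj_step p₀ h0 h1
      simp only [zero_add, Function.iterate_one]
      refine ⟨ha, ?_⟩
      have key : 9 * (1 - p₀) ^ 2 ≤ ε := by
        have hu : 1 / s = s / 8 := by
          rw [eq_div_iff (by norm_num : (8:ℝ) ≠ 0)]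
          nlinarith
        rw [hp₀, hε, hu]
        nlinarith
      calc 3 * (1 - gmaj p₀) ≤ 9 * (1 - p₀) ^ 2 := by linarith
        _ ≤ ε := key
        _ = ε ^ (2 ^ 0) := by norm_num
    | succ k ih =>
      obtain ⟨ih0, ih1⟩ := ih
      set q := gmaj^[k + 1] p₀ with hq
      have hεpow1 : ε ^ (2 ^ k) ≤ 1 := pow_le_one₀ hε0 hε1
      have h1 : 1 - q ≤ 3 / 2 := by linarith
      obtain ⟨ha, hb⟩ := gmaj_step q ih0 h1
      rw [Function.iterate_succ_apply', ← hq]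
      refine ⟨ha, ?_⟩
      have hsq : (3 * (1 - q)) ^ 2 ≤ (ε ^ (2 ^ k)) ^ 2 := by
        apply pow_le_pow_left₀ (by linarith) ih1
      have hrw : (ε ^ (2 ^ k)) ^ 2 = ε ^ (2 ^ (k + 1)) := by
        rw [← pow_mul, pow_succ]
      nlinarith [sq_nonneg (1 - q)]
  obtain ⟨h0, h1⟩ := main n
  linarith
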